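/- Let U have basis (α_i)_{i∈J} with reflections σ_i(v) = v − k_i(v)·α_i where k_i(α_j) = 2δ_{ij}, and let Y have symplectic basis (x_i, y_i)_{i∈J} with maps S_i negating the plane span{x_i, y_i} and fixing the others. Then the map sending σ_i ↦ S_i extends to a group isomorphism between the subgroup of GL(U) generated by {σ_i} and the subgroup of GL(Y) generated by {S_i}. -/

import Mathlib

/-!
Both groups are faithful images of the same sign group `J → ℝˣ`, with `σ i` and `S i` the images
of the sign vector that is `-1` exactly at `i`: in the basis `α`, `σ i` negates `α i` and fixes the
other `α j`, while `S i` negates `x i, y i` and fixes the other basis vectors. An injective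
homomorphism maps the subgroup generated by a family isomorphically onto the subgroup generated
by the image family.
-/

open Function Subgroup

theorem Subgroup.closure_range_comp {G H ι : Type*} [Group G] [Group H] (φ : G →* H)
    (g : ι → G) : closure (Set.range (φ ∘ g)) = (closure (Set.range g)).map φ := by
  rw [Set.range_comp, MonoidHom.map_closure]

theorem Subgroup.exists_mulEquiv_closure_range_comp {G H K ι : Type*} [Group G] [Group H]
    [Group K] {φ : G →* H} {ψ : G →* K} (hφ : Injective φ) (hψ : Injective ψ) (g : ι → G) :
    ∃ e : closure (Set.range (φ ∘ g)) ≃* closure (Set.range (ψ ∘ g)),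
      ∀ i, (e ⟨φ (g i), subset_closure ⟨i, rfl⟩⟩ : K) = ψ (g i) := by
  set C := closure (Set.range g)
  refine ⟨(MulEquiv.subgroupCongr (closure_range_comp φ g)).trans <|
    (C.equivMapOfInjective φ hφ).symm.trans <|
      (C.equivMapOfInjective ψ hψ).trans (MulEquiv.subgroupCongr (closure_range_comp ψ g).symm),
    fun i => ?_⟩
  have hsymm : (C.equivMapOfInjective φ hφ).symm ⟨φ (g i), _⟩ = ⟨g i, subset_closure ⟨i, rfl⟩⟩ :=
    (MulEquiv.symm_apply_eq _).mpr rfl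
  exact congrArg (fun x => ψ x.1) hsymm

namespace Module.Basis

variable {R V I J : Type*} [CommRing R] [AddCommGroup V] [Module R V]

noncomputable def unitsSMulHom (b : Basis I R V) (p : I → J) : (J → Rˣ) →* (V ≃ₗ[R] V) where
  toFun w := b.equiv (b.unitsSMul (w ∘ p)) (Equiv.refl I)
  map_one' := b.ext' fun i => by simp [equiv_apply, unitsSMul_apply]
  map_mul' w w' := b.ext' fun i => by
    simp [equiv_apply, unitsSMul_apply, Units.smul_def, mul_smul, smul_comm (w (p i) : R)]

theorem unitsSMulHom_apply_basis (b : Basis I R V) (p : I → J) (w : J → Rˣ) (i : I) :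
    b.unitsSMulHom p w (b i) = w (p i) • b i := by
  simp [unitsSMulHom, equiv_apply, unitsSMul_apply]

theorem unitsSMulHom_injective [Nontrivial R] (b : Basis I R V) {p : I → J} (hp : Function.Surjective p) :
    Function.Injective (b.unitsSMulHom p) := by
  intro w w' h
  funext j
  obtain ⟨i, rfl⟩ := hp j
  have h' := congr(b.repr ($h (b i)) i)
  exact Units.ext (by simpa [unitsSMulHom_apply_basis, Units.smul_def] using h')

end Module.Basis

theorem weyl_group_iso_symplectic_model_general
    (U : Type*) [AddCommGroup U] [Module ℝ U]
    (Y : Type*) [AddCommGroup Y] [Module ℝ Y]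
    (J : Type*) [DecidableEq J]
    (bU : Module.Basis J ℝ U)
    (k : J → U →ₗ[ℝ] ℝ) (hk : ∀ i j, k i (bU j) = if j = i then 2 else 0)
    (σ : J → U ≃ₗ[ℝ] U) (hσ : ∀ i v, σ i v = v - k i v • bU i)
    (bY : Module.Basis (J ⊕ J) ℝ Y)
    (S : J → Y ≃ₗ[ℝ] Y)
    (hSx : ∀ i j, S i (bY (Sum.inl j)) = if j = i then -bY (Sum.inl j) else bY (Sum.inl j))
    (hSy : ∀ i j, S i (bY (Sum.inr j)) = if j = i then -bY (Sum.inr j) else bY (Sum.inr j)) :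
    ∃ e : Subgroup.closure (Set.range σ) ≃* Subgroup.closure (Set.range S),
      ∀ i, (e ⟨σ i, Subgroup.subset_closure ⟨i, rfl⟩⟩ : Y ≃ₗ[ℝ] Y) = S i := by
  let sign (i : J) : J → ℝˣ := Pi.mulSingle i (-1)
  obtain rfl : σ = bU.unitsSMulHom id ∘ sign := by
    funext i
    refine bU.ext' fun j => ?_
    rcases eq_or_ne j i with rfl | hji
    · simp only [sign, hσ, hk, if_pos, comp_apply, id_eq, Module.Basis.unitsSMulHom_apply_basis,
        Pi.mulSingle_eq_same, Units.smul_def, Units.val_neg, Units.val_one, neg_smul, one_smul]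
      module
    · simp [sign, hσ, hk, hji, Module.Basis.unitsSMulHom_apply_basis]
  obtain rfl : S = bY.unitsSMulHom (Sum.elim id id) ∘ sign := by
    funext i
    refine bY.ext' fun j => ?_
    rcases j with j | j <;> by_cases hji : j = i <;>
      simp [sign, hSx, hSy, hji, Module.Basis.unitsSMulHom_apply_basis]
  exact exists_mulEquiv_closure_range_comp (bU.unitsSMulHom_injective surjective_id)
    (bY.unitsSMulHom_injective (p := Sum.elim id id) fun j => ⟨Sum.inl j, rfl⟩) sign

theorem weyl_group_iso_symplectic_model
    (U : Type*) [AddCommGroup U] [Module ℝ U]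
    (Y : Type*) [AddCommGroup Y] [Module ℝ Y]
    (J : Type*) [Fintype J] [DecidableEq J]
    (bU : Module.Basis J ℝ U)
    (k : J → U →ₗ[ℝ] ℝ) (hk : ∀ i j, k i (bU j) = if j = i then 2 else 0)
    (σ : J → U ≃ₗ[ℝ] U) (hσ : ∀ i v, σ i v = v - k i v • bU i)
    (bY : Module.Basis (J ⊕ J) ℝ Y)
    (S : J → Y ≃ₗ[ℝ] Y)
    (hSx : ∀ i j, S i (bY (Sum.inl j)) = if j = i then -bY (Sum.inl j) else bY (Sum.inl j))
    (hSy : ∀ i j, S i (bY (Sum.inr j)) = if j = i then -bY (Sum.inr j) else bY (Sum.inr j)) :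
    ∃ e : Subgroup.closure (Set.range σ) ≃* Subgroup.closure (Set.range S),
      ∀ i, (e ⟨σ i, Subgroup.subset_closure ⟨i, rfl⟩⟩ : Y ≃ₗ[ℝ] Y) = S i :=
  weyl_group_iso_symplectic_model_general U Y J bU k hk σ hσ bY S hSx hSy
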